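/- arXiv:2203.09696 — 2 statements merged into one kernel-verified Lean document; each statement's English description precedes it below -/
import Mathlib

section
/- Let V be a finite nonempty set of even cardinality, let s ∉ V, and let E be a set of 3-element subsets of V ∪ {s}, each containing s, such that every element of V belongs to exactly 2 members of E. Then |E| ≥ 4. -/
/-- Lemma 3: with V nonempty of even cardinality, if every vertex of V lies in
exactly 2 of the 3-element hyperedges through s, then there are at least 4
hyperedges. -/
theorem card_edges_ge_four {α : Type*} [DecidableEq α]
    (V : Finset α) (s : α) (hs : s ∉ V) (E : Finset (Finset α))
    (hVne : V.Nonempty) (hVeven : Even V.card)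
    (hE : ∀ e ∈ E, e.card = 3 ∧ s ∈ e ∧ e ⊆ insert s V)
    (hdeg : ∀ v ∈ V, (E.filter (fun e => v ∈ e)).card = 2) :
    4 ≤ E.card := by
  -- each edge meets V in exactly 2 vertices
  have key : ∀ e ∈ E, (V.filter (fun v => v ∈ e)).card = 2 := by
    intro e he
    obtain ⟨hc, hse, hsub⟩ := hE e he
    have h1 : V.filter (fun v => v ∈ e) = e.erase s := by
      ext x
      simp only [Finset.mem_filter, Finset.mem_erase]
      constructor
      · rintro ⟨hxV, hxe⟩
        exact ⟨fun h => hs (h ▸ hxV), hxe⟩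
      · rintro ⟨hxs, hxe⟩
        rcases Finset.mem_insert.1 (hsub hxe) with h | h
        · exact absurd h hxs
        · exact ⟨h, hxe⟩
    rw [h1, Finset.card_erase_of_mem hse, hc]
  -- double counting: |V| = |E|
  have hcount : V.card = E.card := by
    have h1 : ∑ v ∈ V, (E.filter (fun e => v ∈ e)).card
        = ∑ e ∈ E, (V.filter (fun v => v ∈ e)).card := by
      simp only [Finset.card_filter]
      exact Finset.sum_comm
    have h2 : ∑ v ∈ V, (E.filter (fun e => v ∈ e)).card = 2 * V.card := by
      rw [Finset.sum_congr rfl hdeg, Finset.sum_const, smul_eq_mul, mul_comm]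
    have h3 : ∑ e ∈ E, (V.filter (fun v => v ∈ e)).card = 2 * E.card := by
      rw [Finset.sum_congr rfl key, Finset.sum_const, smul_eq_mul, mul_comm]
    omega
  -- E is nonempty, in fact has at least 2 elements
  obtain ⟨v, hv⟩ := hVne
  have h2le : 2 ≤ E.card := by
    have := hdeg v hv
    have hle := Finset.card_le_card (Finset.filter_subset (fun e => v ∈ e) E)
    omega
  -- rule out |E| = 2
  have hne2 : E.card ≠ 2 := by
    intro h2
    have hall : ∀ e ∈ E, e = insert s V := by
      intro e he
      obtain ⟨hc, hse, hsub⟩ := hE e he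
      have hVe : V ⊆ e := by
        intro w hw
        have hfe : E.filter (fun e => w ∈ e) = E :=
          Finset.eq_of_subset_of_card_le (Finset.filter_subset _ _)
            (by rw [hdeg w hw, h2])
        have : e ∈ E.filter (fun e => w ∈ e) := hfe.symm ▸ he
        exact (Finset.mem_filter.1 this).2
      have hsubset : insert s V ⊆ e := Finset.insert_subset hse hVe
      have hcard : (insert s V).card = 3 := by
        rw [Finset.card_insert_of_notMem hs]
        omega
      exact (Finset.eq_of_subset_of_card_le hsubset (by omega)).symm
    have : E ⊆ {insert s V} := fun e he => Finset.mem_singleton.2 (hall e he)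
    have := Finset.card_le_card this
    simp at this
    omega
  obtain ⟨k, hk⟩ := hVeven
  omega
end

section
/- Let V be a finite set of even cardinality, let s ∉ V, and let E be a nonempty set of 3-element subsets of V ∪ {s}, each containing s and two elements of V, such that every element of V belongs to at least 1 and at most 2 members of E, and at least one element of V belongs to exactly 2 members of E. Then |E| ≥ 3. -/
/-- Lemma 5: if every vertex of V (with |V| even) lies in 1 or 2 of the
3-element hyperedges through s, and some vertex lies in exactly 2 of them,
then there are at least 3 hyperedges. -/
theorem card_edges_ge_three {α : Type*} [DecidableEq α]
    (V : Finset α) (s : α) (hs : s ∉ V) (E : Finset (Finset α))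
    (hVeven : Even V.card) (hEne : E.Nonempty)
    (hE : ∀ e ∈ E, e.card = 3 ∧ s ∈ e ∧ e ⊆ insert s V)
    (hdeg : ∀ v ∈ V, 1 ≤ (E.filter (fun e => v ∈ e)).card ∧
      (E.filter (fun e => v ∈ e)).card ≤ 2)
    (hB : ∃ v ∈ V, (E.filter (fun e => v ∈ e)).card = 2) :
    3 ≤ E.card := by
  by_contra h
  push_neg at h
  have hE2 : E.card ≤ 2 := by omega
  obtain ⟨v, hv, hv2⟩ := hB
  -- each edge meets V in exactly 2 vertices
  have hedge : ∀ e ∈ E, (V.filter (fun w => w ∈ e)).card = 2 := by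
    intro e he
    obtain ⟨hc, hse, hsub⟩ := hE e he
    have heq : V.filter (fun w => w ∈ e) = e.erase s := by
      ext x
      simp only [Finset.mem_filter, Finset.mem_erase]
      constructor
      · rintro ⟨hxV, hxe⟩
        exact ⟨fun hxs => hs (hxs ▸ hxV), hxe⟩
      · rintro ⟨hxs, hxe⟩
        have := hsub hxe
        rw [Finset.mem_insert] at this
        rcases this with h' | h'
        · exact absurd h' hxs
        · exact ⟨h', hxe⟩
    rw [heq, Finset.card_erase_of_mem hse, hc]
  -- double counting
  have key : ∑ w ∈ V, (E.filter (fun e => w ∈ e)).card = 2 * E.card := by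
    calc ∑ w ∈ V, (E.filter (fun e => w ∈ e)).card
        = ∑ w ∈ V, ∑ e ∈ E, (if w ∈ e then 1 else 0) :=
          Finset.sum_congr rfl (fun w _ => Finset.card_filter _ _)
      _ = ∑ e ∈ E, ∑ w ∈ V, (if w ∈ e then 1 else 0) := Finset.sum_comm
      _ = ∑ e ∈ E, (V.filter (fun w => w ∈ e)).card :=
          Finset.sum_congr rfl (fun e _ => (Finset.card_filter _ _).symm)
      _ = ∑ e ∈ E, 2 := Finset.sum_congr rfl hedge
      _ = 2 * E.card := by rw [Finset.sum_const, smul_eq_mul, mul_comm]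
  -- lower bound on the degree sum
  have hlow : V.card + 1 ≤ ∑ w ∈ V, (E.filter (fun e => w ∈ e)).card := by
    rw [← Finset.add_sum_erase _ _ hv, hv2]
    have h1 : ∑ w ∈ V.erase v, 1 ≤ ∑ w ∈ V.erase v, (E.filter (fun e => w ∈ e)).card :=
      Finset.sum_le_sum (fun w hw => (hdeg w (Finset.mem_of_mem_erase hw)).1)
    rw [Finset.sum_const, smul_eq_mul, mul_one] at h1
    have h2 : (V.erase v).card = V.card - 1 := Finset.card_erase_of_mem hv
    have h3 : 1 ≤ V.card := Finset.card_pos.mpr ⟨v, hv⟩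
    omega
  -- hence V.card ≤ 3, and being even and nonempty, V.card = 2
  have hV2 : V.card = 2 := by
    have h3 : 1 ≤ V.card := Finset.card_pos.mpr ⟨v, hv⟩
    obtain ⟨k, hk⟩ := hVeven
    omega
  -- every edge equals insert s V
  have hins : (insert s V).card = 3 := by
    rw [Finset.card_insert_of_notMem hs, hV2]
  have hall : ∀ e ∈ E, e = insert s V := by
    intro e he
    obtain ⟨hc, _, hsub⟩ := hE e he
    exact Finset.eq_of_subset_of_card_le hsub (by omega)
  -- but v has degree 2, giving two distinct edges
  have : 1 < (E.filter (fun e => v ∈ e)).card := by omega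
  obtain ⟨e1, he1, e2, he2, hne⟩ := Finset.one_lt_card.mp this
  rw [Finset.mem_filter] at he1 he2
  exact hne ((hall e1 he1.1).trans (hall e2 he2.1).symm)
end
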